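/- arXiv:1908.07211 — 8 statements merged into one kernel-verified Lean document; each statement's English description precedes it below -/
import Mathlib

section
/- Let (a_n)_{n≥0} be a sequence of nonnegative real numbers satisfying a_{n+1} ≤ (1 − α_n) a_n + α_n b_n for all n, where (α_n)_{n≥0} ⊂ (0,1) and (b_n)_{n≥0} is a real sequence. If ∑_{n=0}^∞ α_n = ∞ and limsup_{n→∞} b_n ≤ 0, then lim_{n→∞} a_n = 0. -/
/-!
Fix `ε > 0`. Since `limsup b ≤ 0`, eventually `b n ≤ ε`, and then the shifted sequence
`a n - ε` satisfies the homogeneous inequality `u (n+1) ≤ (1 - α n) u n`. Iterating it with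
`1 - x ≤ exp (-x)` bounds the positive part of `a n - ε` by `exp (-∑ α k)` times a constant,
which tends to `0` because `∑ α n = ∞`. Hence eventually `a n < 2ε`.
-/

open Filter Finset Real

theorem tendsto_sum_Ico_atTop {α : ℕ → ℝ}
    (hsum : Tendsto (fun n => ∑ k ∈ range n, α k) atTop atTop) (N : ℕ) :
    Tendsto (fun n => ∑ k ∈ Ico N n, α k) atTop atTop := by
  refine (tendsto_atTop_add_const_right atTop (-∑ k ∈ range N, α k) hsum).congr' ?_
  filter_upwards [eventually_ge_atTop N] with n hn
  rw [sum_Ico_eq_sub _ hn, sub_eq_add_neg]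

theorem le_exp_neg_sum_Ico_mul_of_le_one_sub_mul {u α : ℕ → ℝ} {N : ℕ}
    (hα : ∀ n ≥ N, α n ≤ 1) (hu : ∀ n ≥ N, u (n + 1) ≤ (1 - α n) * u n) :
    ∀ n ≥ N, u n ≤ exp (-∑ k ∈ Ico N n, α k) * max (u N) 0 := by
  intro n hn
  induction n, hn using Nat.le_induction with
  | base => simp
  | succ n hn ih =>
    have hM : 0 ≤ exp (-∑ k ∈ Ico N n, α k) * max (u N) 0 := by positivity
    calc u (n + 1) ≤ (1 - α n) * u n := hu n hn
      _ ≤ (1 - α n) * (exp (-∑ k ∈ Ico N n, α k) * max (u N) 0) :=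
        mul_le_mul_of_nonneg_left ih (sub_nonneg.2 (hα n hn))
      _ ≤ exp (-α n) * (exp (-∑ k ∈ Ico N n, α k) * max (u N) 0) :=
        mul_le_mul_of_nonneg_right (one_sub_le_exp_neg _) hM
      _ = exp (-∑ k ∈ Ico N (n + 1), α k) * max (u N) 0 := by
        rw [sum_Ico_succ_top hn, neg_add, exp_add]
        ring

theorem tendsto_max_zero_of_le_one_sub_mul {u α : ℕ → ℝ}
    (hsum : Tendsto (fun n => ∑ k ∈ range n, α k) atTop atTop)
    (hα : ∀ᶠ n in atTop, α n ≤ 1) (hu : ∀ᶠ n in atTop, u (n + 1) ≤ (1 - α n) * u n) :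
    Tendsto (fun n => max (u n) 0) atTop (nhds 0) := by
  obtain ⟨N, hN⟩ := eventually_atTop.1 (hα.and hu)
  have hbound := le_exp_neg_sum_Ico_mul_of_le_one_sub_mul (fun n hn => (hN n hn).1)
    (fun n hn => (hN n hn).2)
  have hdecay : Tendsto (fun n => exp (-∑ k ∈ Ico N n, α k) * max (u N) 0) atTop (nhds 0) := by
    simpa using (tendsto_exp_atBot.comp
      (tendsto_neg_atTop_atBot.comp (tendsto_sum_Ico_atTop hsum N))).mul_const (max (u N) 0)
  refine tendsto_of_tendsto_of_tendsto_of_le_of_le' tendsto_const_nhds hdecay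
    (Eventually.of_forall fun n => le_max_right _ _) ?_
  filter_upwards [eventually_ge_atTop N] with n hn
  exact max_le (hbound n hn) (by positivity)

/-- Xu's lemma: if `a (n+1) ≤ (1 - α n) * a n + α n * b n` with `a n ≥ 0`,
`α n ∈ (0,1)`, `∑ α n = ∞` and `limsup b n ≤ 0`, then `a n → 0`. -/
theorem xu_lemma (a b α : ℕ → ℝ)
    (ha : ∀ n, 0 ≤ a n)
    (hα : ∀ n, α n ∈ Set.Ioo (0 : ℝ) 1)
    (hrec : ∀ n, a (n + 1) ≤ (1 - α n) * a n + α n * b n)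
    (hsum : Tendsto (fun N => ∑ n ∈ Finset.range N, α n) atTop atTop)
    (hb : Filter.limsup (fun n => (b n : EReal)) atTop ≤ (0 : EReal)) :
    Tendsto a atTop (nhds 0) := by
  refine tendsto_order.2 ⟨fun c hc => Eventually.of_forall fun n => hc.trans_le (ha n),
    fun c hc => ?_⟩
  have hε : 0 < c / 2 := half_pos hc
  have hb_small : ∀ᶠ n in atTop, b n < c / 2 := by
    have : limsup (fun n => (b n : EReal)) atTop < ((c / 2 : ℝ) : EReal) :=
      hb.trans_lt (EReal.coe_pos.2 hε)
    filter_upwards [eventually_lt_of_limsup_lt this] with n hn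
    exact EReal.coe_lt_coe_iff.1 hn
  have hshift : ∀ᶠ n in atTop, a (n + 1) - c / 2 ≤ (1 - α n) * (a n - c / 2) := by
    filter_upwards [hb_small] with n hn
    nlinarith [hrec n, (hα n).1]
  have hpos := tendsto_max_zero_of_le_one_sub_mul (u := fun n => a n - c / 2) hsum
    (Eventually.of_forall fun n => (hα n).2.le) hshift
  filter_upwards [hpos.eventually (eventually_lt_nhds hε)] with n hn
  linarith [le_max_left (a n - c / 2) 0]
end

section
/- For every solution x* ∈ X* of VI(X,F) and every k ≥ 0, the iterates of the FBF algorithm satisfy ⟨x* − z^k, r^k − x^k⟩ ≥ 0. -/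
open scoped RealInnerProductSpace

/-- For every solution `xstar` of `VI(X,F)` and every `k`, the FBF iterates satisfy
`⟪xstar - z k, r k - x k⟫ ≥ 0`. -/
theorem fbf_inner_nonneg
    {H : Type*} [NormedAddCommGroup H] [InnerProductSpace ℝ H] [CompleteSpace H]
    (X : Set H) (hXne : X.Nonempty) (hXcl : IsClosed X) (hXconv : Convex ℝ X)
    (F : H → H) (L : ℝ) (hL : 0 < L)
    (hLip : ∀ x y : H, ‖F x - F y‖ ≤ L * ‖x - y‖)
    (hPM : ∀ x ∈ X, ∀ y ∈ X, 0 ≤ ⟪F x, y - x⟫ → 0 ≤ ⟪F y, y - x⟫)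
    (γ : ℝ) (hγ : γ ∈ Set.Ioo 0 (1 / L))
    (α β : ℕ → ℝ) (hα : ∀ k, α k ∈ Set.Ioo (0 : ℝ) 1) (hβ : ∀ k, β k ∈ Set.Ioo (0 : ℝ) 1)
    (x z r : ℕ → H) (hx0 : x 0 ∈ X)
    -- `z k = P_X (x k - γ F(x k))`, via the variational characterization of the projection
    (hz : ∀ k, z k ∈ X ∧ ∀ y ∈ X, 0 ≤ ⟪(x k - γ • F (x k)) - z k, z k - y⟫)
    (hr : ∀ k, r k = z k + γ • (F (x k) - F (z k)))
    (hxs : ∀ k, x (k + 1) = (1 - α k - β k) • x k + β k • r k)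
    (xstar : H) (hstar : xstar ∈ X ∧ ∀ y ∈ X, 0 ≤ ⟪F xstar, y - xstar⟫) :
    ∀ k, 0 ≤ ⟪xstar - z k, r k - x k⟫ := by
  intro k
  have h1 := (hz k).2 xstar hstar.1
  have h2 : 0 ≤ ⟪F (z k), z k - xstar⟫ :=
    hPM xstar hstar.1 (z k) (hz k).1 (hstar.2 (z k) (hz k).1)
  have key : ⟪xstar - z k, r k - x k⟫ =
      ⟪(x k - γ • F (x k)) - z k, z k - xstar⟫ + γ * ⟪F (z k), z k - xstar⟫ := by
    rw [hr k]
    simp only [inner_sub_left, inner_sub_right, inner_add_left, inner_add_right,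
      real_inner_smul_left, real_inner_smul_right, real_inner_comm (z k)]
    ring_nf
    rw [real_inner_comm (F (x k)) xstar, real_inner_comm (F (z k)) xstar,
      real_inner_comm (F (x k)) (z k), real_inner_comm (x k) xstar]
    ring
  rw [key]
  have := hγ.1
  positivity
end

section
/- (Fundamental recursion.) For every solution x* ∈ X* of VI(X,F) and every k ≥ 0, the iterates of the FBF algorithm satisfy ‖r^k − x*‖² ≤ ‖x^k − x*‖² − (1 − (γL)²) ‖x^k − z^k‖². -/
open scoped RealInnerProductSpace
open Filter

/-- Fundamental recursion for the FBF algorithm. -/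
theorem fbf_fundamental_recursion
    {H : Type*} [NormedAddCommGroup H] [InnerProductSpace ℝ H] [CompleteSpace H]
    (X : Set H) (hXne : X.Nonempty) (hXcl : IsClosed X) (hXconv : Convex ℝ X)
    (F : H → H) (L : ℝ) (hL : 0 < L)
    (hLip : ∀ x y : H, ‖F x - F y‖ ≤ L * ‖x - y‖)
    (hPM : ∀ x ∈ X, ∀ y ∈ X, 0 ≤ ⟪F x, y - x⟫ → 0 ≤ ⟪F y, y - x⟫)
    (γ : ℝ) (hγ : γ ∈ Set.Ioo 0 (1 / L))
    (α β : ℕ → ℝ) (hα : ∀ k, α k ∈ Set.Ioo (0 : ℝ) 1) (hβ : ∀ k, β k ∈ Set.Ioo (0 : ℝ) 1)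
    (x z r : ℕ → H) (hx0 : x 0 ∈ X)
    -- `z k = P_X (x k - γ F (x k))`, via the variational characterization of the projection
    (hz : ∀ k, z k ∈ X ∧ ∀ y ∈ X, 0 ≤ ⟪(x k - γ • F (x k)) - z k, z k - y⟫)
    (hr : ∀ k, r k = z k + γ • (F (x k) - F (z k)))
    (hxs : ∀ k, x (k + 1) = (1 - α k - β k) • x k + β k • r k)
    (xstar : H) (hstar : xstar ∈ X ∧ ∀ y ∈ X, 0 ≤ ⟪F xstar, y - xstar⟫) :
    ∀ k, ‖r k - xstar‖ ^ 2 ≤ ‖x k - xstar‖ ^ 2 - (1 - (γ * L) ^ 2) * ‖x k - z k‖ ^ 2 := by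
  intro k
  obtain ⟨hzX, hproj⟩ := hz k
  obtain ⟨hsX, hsol⟩ := hstar
  have hproj' : 0 ≤ ⟪(x k - γ • F (x k)) - z k, z k - xstar⟫ := hproj xstar hsX
  have hpm : 0 ≤ ⟪F (z k), z k - xstar⟫ := hPM xstar hsX (z k) hzX (hsol (z k) hzX)
  have hγ0 : 0 < γ := hγ.1
  have hlip : ‖F (x k) - F (z k)‖ ≤ L * ‖x k - z k‖ := hLip _ _
  have hr' : r k - xstar = (z k - xstar) + γ • (F (x k) - F (z k)) := by
    rw [hr k]; abel
  have expand : ‖r k - xstar‖ ^ 2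
      = ‖z k - xstar‖ ^ 2 + 2 * ⟪z k - xstar, γ • (F (x k) - F (z k))⟫
        + ‖γ • (F (x k) - F (z k))‖ ^ 2 := by
    rw [hr', norm_add_sq_real]
  have h3 : ‖x k - xstar‖ ^ 2
      = ‖x k - z k‖ ^ 2 + 2 * ⟪x k - z k, z k - xstar⟫ + ‖z k - xstar‖ ^ 2 := by
    have e : x k - xstar = (x k - z k) + (z k - xstar) := by abel
    rw [e, norm_add_sq_real]
  have key : ⟪z k - xstar, γ • (F (x k) - F (z k))⟫
      = -⟪(x k - γ • F (x k)) - z k, z k - xstar⟫ - γ * ⟪F (z k), z k - xstar⟫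
        + ⟪x k - z k, z k - xstar⟫ := by
    simp only [inner_sub_left, inner_sub_right, real_inner_smul_left, real_inner_smul_right,
      real_inner_comm (z k - xstar)]
    ring
  have hsq : ‖γ • (F (x k) - F (z k))‖ ^ 2 ≤ (γ * L) ^ 2 * ‖x k - z k‖ ^ 2 := by
    rw [norm_smul, Real.norm_eq_abs, abs_of_pos hγ0]
    have h1 : 0 ≤ ‖F (x k) - F (z k)‖ := norm_nonneg _
    have h2 := mul_le_mul hlip hlip h1 (by positivity : (0:ℝ) ≤ L * ‖x k - z k‖)
    nlinarith [sq_nonneg γ]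
  linarith [expand, h3, key, hsq, hproj', mul_nonneg hγ0.le hpm]
end

section
/- The sequence (x^k)_{k≥0} generated by the FBF algorithm is bounded (and consequently the sequence (r^k)_{k≥0} is bounded as well); more precisely, for any x* ∈ X*, ‖x^{k} − x*‖ ≤ max{‖x^0 − x*‖, ‖x*‖} for all k ≥ 0. -/
open scoped RealInnerProductSpace
open Filter

/-- The FBF iterates are bounded: `‖x k - xstar‖ ≤ max ‖x 0 - xstar‖ ‖xstar‖`. -/
theorem fbf_bounded
    {H : Type*} [NormedAddCommGroup H] [InnerProductSpace ℝ H] [CompleteSpace H]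
    (X : Set H) (hXne : X.Nonempty) (hXcl : IsClosed X) (hXconv : Convex ℝ X)
    (F : H → H) (L : ℝ) (hL : 0 < L)
    (hLip : ∀ x y : H, ‖F x - F y‖ ≤ L * ‖x - y‖)
    (hPM : ∀ x ∈ X, ∀ y ∈ X, 0 ≤ ⟪F x, y - x⟫ → 0 ≤ ⟪F y, y - x⟫)
    (γ : ℝ) (hγ : γ ∈ Set.Ioo 0 (1 / L))
    (α β : ℕ → ℝ) (hα : ∀ k, α k ∈ Set.Ioo (0 : ℝ) 1) (hβ : ∀ k, β k ∈ Set.Ioo (0 : ℝ) 1)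
    (hαβ : ∀ k, α k + β k < 1)
    (x z r : ℕ → H) (hx0 : x 0 ∈ X)
    -- `z k = P_X (x k - γ F (x k))`, via the variational characterization of the projection
    (hz : ∀ k, z k ∈ X ∧ ∀ y ∈ X, 0 ≤ ⟪(x k - γ • F (x k)) - z k, z k - y⟫)
    (hr : ∀ k, r k = z k + γ • (F (x k) - F (z k)))
    (hxs : ∀ k, x (k + 1) = (1 - α k - β k) • x k + β k • r k)
    (xstar : H) (hstar : xstar ∈ X ∧ ∀ y ∈ X, 0 ≤ ⟪F xstar, y - xstar⟫) :
    ∀ k, ‖x k - xstar‖ ≤ max ‖x 0 - xstar‖ ‖xstar‖ := by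
  have hγ0 : 0 < γ := hγ.1
  have hγL : γ * L < 1 := by
    have h2 := hγ.2
    rw [lt_div_iff₀ hL] at h2
    exact h2
  -- Key contraction: ‖r k - xstar‖ ≤ ‖x k - xstar‖
  have key : ∀ k, ‖r k - xstar‖ ≤ ‖x k - xstar‖ := by
    intro k
    have hzX := (hz k).1
    have hproj := (hz k).2 xstar hstar.1
    have hps : 0 ≤ ⟪F (z k), z k - xstar⟫ :=
      hPM xstar hstar.1 (z k) hzX (hstar.2 (z k) hzX)
    have hlip := hLip (x k) (z k)
    -- expand hproj
    have hproj' : 0 ≤ ⟪x k - z k, z k - xstar⟫ - γ * ⟪F (x k), z k - xstar⟫ := by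
      have e : (x k - γ • F (x k)) - z k = (x k - z k) - γ • F (x k) := by abel
      rw [e, inner_sub_left, real_inner_smul_left] at hproj
      linarith
    -- e1
    have e1 : ‖r k - xstar‖ ^ 2 = ‖z k - xstar‖ ^ 2
        + 2 * (γ * ⟪F (x k) - F (z k), z k - xstar⟫)
        + γ ^ 2 * ‖F (x k) - F (z k)‖ ^ 2 := by
      have e : r k - xstar = (z k - xstar) + γ • (F (x k) - F (z k)) := by
        rw [hr k]; abel
      rw [e, norm_add_sq_real, real_inner_smul_right, norm_smul, Real.norm_eq_abs,
        abs_of_pos hγ0, mul_pow, real_inner_comm]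
    have e2 : ‖x k - xstar‖ ^ 2 = ‖z k - xstar‖ ^ 2
        + 2 * ⟪z k - xstar, x k - z k⟫ + ‖x k - z k‖ ^ 2 := by
      have e : x k - xstar = (z k - xstar) + (x k - z k) := by abel
      rw [e, norm_add_sq_real]
    have e3 : ⟪F (x k) - F (z k), z k - xstar⟫
        = ⟪F (x k), z k - xstar⟫ - ⟪F (z k), z k - xstar⟫ := inner_sub_left _ _ _
    have hcomm : ⟪z k - xstar, x k - z k⟫ = ⟪x k - z k, z k - xstar⟫ :=
      real_inner_comm _ _
    have hsq : ‖r k - xstar‖ ^ 2 ≤ ‖x k - xstar‖ ^ 2 := by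
      have hlipsq : ‖F (x k) - F (z k)‖ ^ 2 ≤ (L * ‖x k - z k‖) ^ 2 := by
        have := norm_nonneg (F (x k) - F (z k))
        nlinarith
      have hwsq : γ ^ 2 * ‖F (x k) - F (z k)‖ ^ 2 ≤ γ ^ 2 * (L * ‖x k - z k‖) ^ 2 :=
        mul_le_mul_of_nonneg_left hlipsq (sq_nonneg γ)
      have hcontr : (1 - γ * L) * (1 + γ * L) * ‖x k - z k‖ ^ 2 ≥ 0 := by
        have h1 : (0:ℝ) ≤ 1 - γ * L := by linarith
        have h2 : (0:ℝ) ≤ 1 + γ * L := by nlinarith [mul_pos hγ0 hL]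
        positivity
      have hpsγ : 0 ≤ γ * ⟪F (z k), z k - xstar⟫ := mul_nonneg hγ0.le hps
      nlinarith [hwsq, hcontr, hpsγ, hproj', e1, e2, e3, hcomm]
    nlinarith [norm_nonneg (r k - xstar), norm_nonneg (x k - xstar)]
  intro k
  induction k with
  | zero => exact le_max_left _ _
  | succ k ih =>
    set M := max ‖x 0 - xstar‖ ‖xstar‖ with hM
    have hrk : ‖r k - xstar‖ ≤ M := le_trans (key k) ih
    have hxsM : ‖xstar‖ ≤ M := le_max_right _ _
    have ha := hα k
    have hb := hβ k
    have hab := hαβ k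
    have hdecomp : x (k + 1) - xstar
        = (1 - α k - β k) • (x k - xstar) + β k • (r k - xstar) + α k • (-xstar) := by
      rw [hxs k]
      simp only [smul_sub, smul_neg, sub_smul, one_smul]
      abel
    rw [hdecomp]
    have h1 : ‖(1 - α k - β k) • (x k - xstar) + β k • (r k - xstar) + α k • (-xstar)‖
        ≤ ‖(1 - α k - β k) • (x k - xstar)‖ + ‖β k • (r k - xstar)‖ + ‖α k • (-xstar)‖ :=
      norm_add₃_le
    have h2 : ‖(1 - α k - β k) • (x k - xstar)‖ = (1 - α k - β k) * ‖x k - xstar‖ := by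
      rw [norm_smul, Real.norm_eq_abs, abs_of_pos (by linarith)]
    have h3 : ‖β k • (r k - xstar)‖ = β k * ‖r k - xstar‖ := by
      rw [norm_smul, Real.norm_eq_abs, abs_of_pos hb.1]
    have h4 : ‖α k • (-xstar)‖ = α k * ‖xstar‖ := by
      rw [norm_smul, Real.norm_eq_abs, abs_of_pos ha.1, norm_neg]
    rw [h2, h3, h4] at h1
    nlinarith [ih, hrk, hxsM, ha.1, hb.1, norm_nonneg (x k - xstar)]
end

section
/- For every solution x* ∈ X* of VI(X,F) and every k ≥ 0, the iterates of the FBF algorithm satisfy β_k (1 − (γL)²) ‖x^k − z^k‖² ≤ ‖x^k − x*‖² − ‖x^{k+1} − x*‖² + α_k ‖x*‖². -/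
open scoped RealInnerProductSpace
open Filter

lemma fbf_convex3 {H : Type*} [NormedAddCommGroup H] [InnerProductSpace ℝ H]
    (a b c : ℝ) (ha : 0 ≤ a) (hb : 0 ≤ b) (hc : 0 ≤ c) (habc : a + b + c = 1)
    (p q s : H) :
    ‖a • p + b • q + c • s‖ ^ 2 ≤ a * ‖p‖ ^ 2 + b * ‖q‖ ^ 2 + c * ‖s‖ ^ 2 := by
  have hpq := abs_real_inner_le_norm p q
  have hps := abs_real_inner_le_norm p s
  have hqs := abs_real_inner_le_norm q s
  have h1 : ⟪p, q⟫ ≤ ‖p‖ * ‖q‖ := (abs_le.mp hpq).2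
  have h2 : ⟪p, s⟫ ≤ ‖p‖ * ‖s‖ := (abs_le.mp hps).2
  have h3 : ⟪q, s⟫ ≤ ‖q‖ * ‖s‖ := (abs_le.mp hqs).2
  have e : ‖a • p + b • q + c • s‖ ^ 2 =
      a^2 * ‖p‖^2 + b^2 * ‖q‖^2 + c^2 * ‖s‖^2
      + 2*a*b*⟪p, q⟫ + 2*a*c*⟪p, s⟫ + 2*b*c*⟪q, s⟫ := by
    rw [← real_inner_self_eq_norm_sq, ← real_inner_self_eq_norm_sq,
      ← real_inner_self_eq_norm_sq, ← real_inner_self_eq_norm_sq]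
    simp only [inner_add_left, inner_add_right, real_inner_smul_left,
      real_inner_smul_right]
    have c1 : ⟪q, p⟫ = ⟪p, q⟫ := real_inner_comm p q
    have c2 : ⟪s, p⟫ = ⟪p, s⟫ := real_inner_comm p s
    have c3 : ⟪s, q⟫ = ⟪q, s⟫ := real_inner_comm q s
    rw [c1, c2, c3]; ring
  rw [e]
  nlinarith [norm_nonneg p, norm_nonneg q, norm_nonneg s,
    sq_nonneg (‖p‖ - ‖q‖), sq_nonneg (‖p‖ - ‖s‖), sq_nonneg (‖q‖ - ‖s‖),
    mul_nonneg ha hb, mul_nonneg ha hc, mul_nonneg hb hc]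

/-- Estimate on the residual `‖x k - z k‖` for the FBF algorithm. -/
theorem fbf_residual_estimate
    {H : Type*} [NormedAddCommGroup H] [InnerProductSpace ℝ H] [CompleteSpace H]
    (X : Set H) (hXne : X.Nonempty) (hXcl : IsClosed X) (hXconv : Convex ℝ X)
    (F : H → H) (L : ℝ) (hL : 0 < L)
    (hLip : ∀ x y : H, ‖F x - F y‖ ≤ L * ‖x - y‖)
    (hPM : ∀ x ∈ X, ∀ y ∈ X, 0 ≤ ⟪F x, y - x⟫ → 0 ≤ ⟪F y, y - x⟫)
    (γ : ℝ) (hγ : γ ∈ Set.Ioo 0 (1 / L))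
    (α β : ℕ → ℝ) (hα : ∀ k, α k ∈ Set.Ioo (0 : ℝ) 1) (hβ : ∀ k, β k ∈ Set.Ioo (0 : ℝ) 1)
    (hαβ : ∀ k, α k + β k < 1)
    (x z r : ℕ → H) (hx0 : x 0 ∈ X)
    -- `z k = P_X (x k - γ F (x k))`, via the variational characterization of the projection
    (hz : ∀ k, z k ∈ X ∧ ∀ y ∈ X, 0 ≤ ⟪(x k - γ • F (x k)) - z k, z k - y⟫)
    (hr : ∀ k, r k = z k + γ • (F (x k) - F (z k)))
    (hxs : ∀ k, x (k + 1) = (1 - α k - β k) • x k + β k • r k)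
    (xstar : H) (hstar : xstar ∈ X ∧ ∀ y ∈ X, 0 ≤ ⟪F xstar, y - xstar⟫) :
    ∀ k, β k * (1 - (γ * L) ^ 2) * ‖x k - z k‖ ^ 2 ≤
      ‖x k - xstar‖ ^ 2 - ‖x (k + 1) - xstar‖ ^ 2 + α k * ‖xstar‖ ^ 2 := by
  intro k
  obtain ⟨hzX, hzproj⟩ := hz k
  obtain ⟨hsX, hsVI⟩ := hstar
  have hγ0 : 0 < γ := hγ.1
  -- projection inequality at xstar
  have h1 : 0 ≤ ⟪(x k - γ • F (x k)) - z k, z k - xstar⟫ := hzproj xstar hsX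
  have h1' : 0 ≤ ⟪x k - z k, z k - xstar⟫ - γ * ⟪F (x k), z k - xstar⟫ := by
    have e : (x k - γ • F (x k)) - z k = (x k - z k) - γ • F (x k) := by abel
    rw [e, inner_sub_left, real_inner_smul_left] at h1
    linarith
  -- pseudomonotonicity
  have h2 : 0 ≤ ⟪F (z k), z k - xstar⟫ := hPM xstar hsX (z k) hzX (hsVI (z k) hzX)
  -- Lipschitz
  have h3 : ‖F (x k) - F (z k)‖ ≤ L * ‖x k - z k‖ := hLip _ _
  have h3' : ‖F (x k) - F (z k)‖ ^ 2 ≤ L ^ 2 * ‖x k - z k‖ ^ 2 := by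
    nlinarith [norm_nonneg (F (x k) - F (z k)), norm_nonneg (x k - z k), hL.le]
  -- expansion of ‖r k - xstar‖²
  have hr' : r k - xstar = (z k - xstar) + γ • (F (x k) - F (z k)) := by
    rw [hr]; abel
  have e1 : ‖r k - xstar‖ ^ 2 = ‖z k - xstar‖ ^ 2
      + 2 * γ * ⟪F (x k) - F (z k), z k - xstar⟫
      + γ ^ 2 * ‖F (x k) - F (z k)‖ ^ 2 := by
    rw [hr', @norm_add_sq_real, real_inner_smul_right, norm_smul,
      Real.norm_eq_abs, abs_of_pos hγ0, mul_pow,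
      real_inner_comm (F (x k) - F (z k)) (z k - xstar)]
    ring
  have e2 : ‖x k - xstar‖ ^ 2 = ‖x k - z k‖ ^ 2
      + 2 * ⟪x k - z k, z k - xstar⟫ + ‖z k - xstar‖ ^ 2 := by
    have e : x k - xstar = (x k - z k) + (z k - xstar) := by abel
    rw [e, @norm_add_sq_real]
  have esub : ⟪F (x k) - F (z k), z k - xstar⟫
      = ⟪F (x k), z k - xstar⟫ - ⟪F (z k), z k - xstar⟫ := inner_sub_left _ _ _
  have hrle : ‖r k - xstar‖ ^ 2 ≤ ‖x k - xstar‖ ^ 2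
      - (1 - (γ * L) ^ 2) * ‖x k - z k‖ ^ 2 := by
    rw [e1, esub]
    nlinarith [h3', h2, h1', hγ0, sq_nonneg γ]
  -- convex combination step
  have ha := hα k
  have hb := hβ k
  have hab := hαβ k
  have hx1 : x (k + 1) - xstar = (1 - α k - β k) • (x k - xstar)
      + β k • (r k - xstar) + α k • (-xstar) := by
    rw [hxs k]
    module
  have hcv : ‖x (k + 1) - xstar‖ ^ 2 ≤ (1 - α k - β k) * ‖x k - xstar‖ ^ 2
      + β k * ‖r k - xstar‖ ^ 2 + α k * ‖-xstar‖ ^ 2 := by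
    rw [hx1]
    exact fbf_convex3 _ _ _ (by linarith) hb.1.le ha.1.le (by ring) _ _ _
  rw [norm_neg] at hcv
  nlinarith [sq_nonneg ‖x k - xstar‖, hb.1, ha.1, hrle, hcv]
end

section
/- Suppose the parameter sequences of the FBF algorithm satisfy α_k + β_k < 1 for all k. Then for every solution x* ∈ X* and every k ≥ 0, ‖x^{k+1} − x*‖² ≤ (1 − α_k)‖x^k − x*‖² + α_k [ 2β_k ‖x^k − r^k‖ · ‖x^{k+1} − x*‖ + 2⟨x*, x* − x^{k+1}⟩ ]. -/
open scoped RealInnerProductSpace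
open Filter

/-- Key recursion used in the strong-convergence proof of the FBF algorithm. -/
theorem fbf_key_recursion
    {H : Type*} [NormedAddCommGroup H] [InnerProductSpace ℝ H] [CompleteSpace H]
    (X : Set H) (hXne : X.Nonempty) (hXcl : IsClosed X) (hXconv : Convex ℝ X)
    (F : H → H) (L : ℝ) (hL : 0 < L)
    (hLip : ∀ x y : H, ‖F x - F y‖ ≤ L * ‖x - y‖)
    (hPM : ∀ x ∈ X, ∀ y ∈ X, 0 ≤ ⟪F x, y - x⟫ → 0 ≤ ⟪F y, y - x⟫)
    (γ : ℝ) (hγ : γ ∈ Set.Ioo 0 (1 / L))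
    (α β : ℕ → ℝ) (hα : ∀ k, α k ∈ Set.Ioo (0 : ℝ) 1) (hβ : ∀ k, β k ∈ Set.Ioo (0 : ℝ) 1)
    (hαβ : ∀ k, α k + β k < 1)
    (x z r : ℕ → H) (hx0 : x 0 ∈ X)
    -- `z k = P_X (x k - γ F (x k))`, via the variational characterization of the projection
    (hz : ∀ k, z k ∈ X ∧ ∀ y ∈ X, 0 ≤ ⟪(x k - γ • F (x k)) - z k, z k - y⟫)
    (hr : ∀ k, r k = z k + γ • (F (x k) - F (z k)))
    (hxs : ∀ k, x (k + 1) = (1 - α k - β k) • x k + β k • r k)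
    (xstar : H) (hstar : xstar ∈ X ∧ ∀ y ∈ X, 0 ≤ ⟪F xstar, y - xstar⟫) :
    ∀ k, ‖x (k + 1) - xstar‖ ^ 2 ≤ (1 - α k) * ‖x k - xstar‖ ^ 2 +
      α k * (2 * β k * ‖x k - r k‖ * ‖x (k + 1) - xstar‖ + 2 * ⟪xstar, xstar - x (k + 1)⟫) := by
  intro k
  obtain ⟨hzX, hzproj⟩ := hz k
  obtain ⟨hsX, hsVI⟩ := hstar
  have hγ0 : 0 < γ := hγ.1
  have hγL : γ * L < 1 := by
    have h2 := hγ.2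
    have : γ * L < (1 / L) * L := by
      exact mul_lt_mul_of_pos_right h2 hL
    simpa [one_div, inv_mul_cancel₀ hL.ne'] using this
  -- Step 1: ‖r k - xstar‖ ≤ ‖x k - xstar‖
  have key : ‖r k - xstar‖ ≤ ‖x k - xstar‖ := by
    -- pseudomonotonicity: 0 ≤ ⟪F (z k), z k - xstar⟫
    have hpm : (0:ℝ) ≤ ⟪F (z k), z k - xstar⟫ :=
      hPM xstar hsX (z k) hzX (hsVI (z k) hzX)
    -- projection inequality at y = xstar
    have hproj : (0:ℝ) ≤ ⟪(x k - γ • F (x k)) - z k, z k - xstar⟫ := hzproj xstar hsX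
    have hproj' : ⟪x k - z k, z k - xstar⟫ - γ * ⟪F (x k), z k - xstar⟫ ≥ 0 := by
      have : (x k - γ • F (x k)) - z k = (x k - z k) - γ • F (x k) := by abel
      rw [this, inner_sub_left, real_inner_smul_left] at hproj
      linarith
    have hLipk : ‖F (x k) - F (z k)‖ ≤ L * ‖x k - z k‖ := hLip (x k) (z k)
    -- expand ‖r k - xstar‖²
    have hrx : r k - xstar = (z k - xstar) + γ • (F (x k) - F (z k)) := by
      rw [hr]; abel
    have e1 : ‖r k - xstar‖ ^ 2 = ‖z k - xstar‖ ^ 2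
        + 2 * (γ * ⟪F (x k) - F (z k), z k - xstar⟫) + γ ^ 2 * ‖F (x k) - F (z k)‖ ^ 2 := by
      rw [hrx, norm_add_sq_real, norm_smul, real_inner_smul_right, real_inner_comm,
        Real.norm_eq_abs, abs_of_pos hγ0]
      try ring
    have e2 : ‖x k - xstar‖ ^ 2 = ‖z k - xstar‖ ^ 2 + 2 * ⟪x k - z k, z k - xstar⟫
        + ‖x k - z k‖ ^ 2 := by
      have : x k - xstar = (z k - xstar) + (x k - z k) := by abel
      rw [this, norm_add_sq_real, real_inner_comm]
      try ring
    have e3 : ⟪F (x k) - F (z k), z k - xstar⟫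
        = ⟪F (x k), z k - xstar⟫ - ⟪F (z k), z k - xstar⟫ := by
      rw [inner_sub_left]
    have hw2 : ‖F (x k) - F (z k)‖ ^ 2 ≤ L ^ 2 * ‖x k - z k‖ ^ 2 := by
      have h0 : (0:ℝ) ≤ ‖F (x k) - F (z k)‖ := norm_nonneg _
      nlinarith [norm_nonneg (x k - z k)]
    have hγL2 : γ ^ 2 * L ^ 2 ≤ 1 := by nlinarith [mul_pos hγ0 hL]
    have h4 : γ ^ 2 * ‖F (x k) - F (z k)‖ ^ 2 ≤ ‖x k - z k‖ ^ 2 := by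
      nlinarith [sq_nonneg γ, sq_nonneg (‖x k - z k‖), hw2]
    have hsq : ‖r k - xstar‖ ^ 2 ≤ ‖x k - xstar‖ ^ 2 := by
      have hpm' : (0:ℝ) ≤ γ * ⟪F (z k), z k - xstar⟫ := mul_nonneg hγ0.le hpm
      have e1' : ‖r k - xstar‖ ^ 2 = ‖z k - xstar‖ ^ 2
          + 2 * (γ * ⟪F (x k), z k - xstar⟫) - 2 * (γ * ⟪F (z k), z k - xstar⟫)
          + γ ^ 2 * ‖F (x k) - F (z k)‖ ^ 2 := by rw [e1, e3]; ring
      linarith [e1', e2, hproj', h4, hpm']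
    nlinarith [norm_nonneg (r k - xstar), norm_nonneg (x k - xstar), hsq]
  -- Step 2: decomposition of x (k+1) - xstar
  set a : H := (1 - α k - β k) • (x k - xstar) + β k • (r k - xstar) with ha
  have hdec : x (k + 1) - xstar = a + (-(α k)) • xstar := by
    rw [hxs]; simp only [ha]; module
  have hnorm_a : ‖a‖ ≤ (1 - α k) * ‖x k - xstar‖ := by
    have h1 : ‖a‖ ≤ ‖(1 - α k - β k) • (x k - xstar)‖ + ‖β k • (r k - xstar)‖ :=
      norm_add_le _ _
    rw [norm_smul, norm_smul, Real.norm_eq_abs, Real.norm_eq_abs,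
      abs_of_nonneg (by linarith [hαβ k] : (0:ℝ) ≤ 1 - α k - β k),
      abs_of_nonneg (le_of_lt (hβ k).1)] at h1
    have hb := (hβ k).1
    have := mul_le_mul_of_nonneg_left key hb.le
    linarith
  have hsq : ‖x (k+1) - xstar‖ ^ 2 ≤ ‖a‖ ^ 2 + 2 * (α k * ⟪xstar, xstar - x (k+1)⟫) := by
    have e : ‖x (k+1) - xstar‖ ^ 2 = ‖a‖ ^ 2 + 2 * ⟪a, (-(α k)) • xstar⟫
        + ‖(-(α k)) • xstar‖ ^ 2 := by rw [hdec, norm_add_sq_real]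
    have e2 : ⟪(-(α k)) • xstar, x (k+1) - xstar⟫
        = ⟪a, (-(α k)) • xstar⟫ + ‖(-(α k)) • xstar‖ ^ 2 := by
      rw [hdec, inner_add_right, real_inner_comm, real_inner_self_eq_norm_sq]
    have e3 : ⟪(-(α k)) • xstar, x (k+1) - xstar⟫ = α k * ⟪xstar, xstar - x (k+1)⟫ := by
      have h5 : ⟪xstar, xstar - x (k+1)⟫ = -⟪xstar, x (k+1) - xstar⟫ := by
        rw [← inner_neg_right]; congr 1; abel
      rw [real_inner_smul_left, h5]; ring
    nlinarith [sq_nonneg ‖(-(α k)) • xstar‖]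
  have halpha := hα k
  have hbk := hβ k
  have ha2 : ‖a‖ ^ 2 ≤ (1 - α k) ^ 2 * ‖x k - xstar‖ ^ 2 := by
    nlinarith [norm_nonneg a, norm_nonneg (x k - xstar), hnorm_a]
  have ha3 : (1 - α k) ^ 2 * ‖x k - xstar‖ ^ 2 ≤ (1 - α k) * ‖x k - xstar‖ ^ 2 := by
    nlinarith [sq_nonneg ‖x k - xstar‖, halpha.1, halpha.2]
  have hslack : 0 ≤ α k * (2 * β k * ‖x k - r k‖ * ‖x (k+1) - xstar‖) :=
    mul_nonneg halpha.1.le (mul_nonneg (mul_nonneg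
      (mul_nonneg (by norm_num) hbk.1.le) (norm_nonneg _)) (norm_nonneg _))
  nlinarith [hsq, ha2, ha3, hslack]
end

section
/- Assume F is additionally sequentially weak-to-weak continuous on bounded subsets of H. Suppose there is a subsequence (x^{k_j})_{j∈ℕ} of the FBF iterates (x^k)_{k≥0} converging weakly to a point x̂, and let (z^{k_j})_{j∈ℕ} be the corresponding subsequence of (z^k)_{k≥0}. If lim_{j→∞} ‖x^{k_j} − z^{k_j}‖ = 0, then x̂ ∈ X*, i.e. x̂ is a solution of VI(X,F). -/
/-! Write `ζ j = z^{k_j}`. The projection inequality and the Lipschitz bound give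
`⟪F (ζ j), y - ζ j⟫ ≥ -C_y ‖x^{k_j} - ζ j‖ → 0` for `y ∈ X`, and `ζ ⇀ x̂`. For a fixed solution `p`,
pseudomonotonicity squeezes `⟪F (ζ j), ζ j - p⟫` to `0`, so by weak continuity of `F`,
`⟪F (ζ j), y - ζ j⟫ → ℓ y := ⟪F x̂, y - p⟫ ≥ 0`. If `ℓ x̂ = 0` then `⟪F x̂, y - x̂⟫ = ℓ y ≥ 0`.
If `ℓ x̂ > 0` then `ℓ` is positive at `y_t = x̂ + t (y - x̂)` for `t ∈ (0, 1)`, so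
pseudomonotonicity and weak convergence give `⟪F y_t, y - x̂⟫ ≥ 0`, and letting `t → 0`
(Minty's trick) gives `⟪F x̂, y - x̂⟫ ≥ 0`. -/

open scoped RealInnerProductSpace
open Filter Topology

section

variable {H : Type*} [NormedAddCommGroup H] [InnerProductSpace ℝ H]

def WeakTendsto (u : ℕ → H) (a : H) : Prop :=
  ∀ w : H, Tendsto (fun n => ⟪u n, w⟫) atTop (𝓝 ⟪a, w⟫)

def PseudomonotoneOn (F : H → H) (X : Set H) : Prop :=
  ∀ x ∈ X, ∀ y ∈ X, 0 ≤ ⟪F x, y - x⟫ → 0 ≤ ⟪F y, y - x⟫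

def IsVISolution (X : Set H) (F : H → H) (x : H) : Prop :=
  x ∈ X ∧ ∀ w ∈ X, 0 ≤ ⟪F x, w - x⟫

namespace WeakTendsto

variable {u v : ℕ → H} {a : H}

theorem of_tendsto_norm_sub (hu : WeakTendsto u a)
    (huv : Tendsto (fun n => ‖u n - v n‖) atTop (𝓝 0)) : WeakTendsto v a := by
  intro w
  have hsmall : Tendsto (fun n => ⟪v n - u n, w⟫) atTop (𝓝 0) :=
    squeeze_zero_norm (fun n => (abs_real_inner_le_norm _ _).trans_eq (by rw [norm_sub_rev]))
      (by simpa using huv.mul_const ‖w‖)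
  simpa [inner_sub_left] using (hu w).add hsmall

theorem isBounded_range [CompleteSpace H] (hu : WeakTendsto u a) :
    Bornology.IsBounded (Set.range u) := by
  obtain ⟨C, hC⟩ := banach_steinhaus (g := fun n => innerSL ℝ (u n)) fun w => by
    obtain ⟨C, hC⟩ := (hu w).norm.bddAbove_range
    exact ⟨C, fun n => hC ⟨n, rfl⟩⟩
  refine isBounded_iff_forall_norm_le.2 ⟨C, ?_⟩
  rintro - ⟨n, rfl⟩
  simpa [innerSL_apply_norm] using hC n

theorem mem_of_isClosed_of_convex [CompleteSpace H] {X : Set H} (hXcl : IsClosed X)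
    (hXconv : Convex ℝ X) (huX : ∀ n, u n ∈ X) (hu : WeakTendsto u a) : a ∈ X := by
  obtain ⟨p, hpX, hp⟩ :=
    exists_norm_eq_iInf_of_complete_convex ⟨u 0, huX 0⟩ hXcl.isComplete hXconv a
  have hobtuse := (norm_eq_iInf_iff_real_inner_le_zero hXconv hpX).mp hp
  have hlim : Tendsto (fun n => ⟪u n - p, a - p⟫) atTop (𝓝 ⟪a - p, a - p⟫) := by
    simpa only [inner_sub_left] using (hu (a - p)).sub_const ⟪p, a - p⟫
  have hle : ⟪a - p, a - p⟫ ≤ 0 :=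
    le_of_tendsto hlim (Eventually.of_forall fun n => real_inner_comm (a - p) _ ▸ hobtuse _ (huX n))
  rwa [sub_eq_zero.mp (real_inner_self_nonpos.mp hle)]

end WeakTendsto

theorem neg_mul_le_inner_of_projection_step {F : H → H} {L γ : ℝ}
    (hLip : ∀ x y : H, ‖F x - F y‖ ≤ L * ‖x - y‖) (hγ : 0 < γ) {x z y : H}
    (hz : 0 ≤ ⟪(x - γ • F x) - z, z - y⟫) :
    -((γ⁻¹ + L) * ‖x - z‖ * ‖y - z‖) ≤ ⟪F z, y - z⟫ := by
  have hproj : ⟪x - z, y - z⟫ ≤ γ * ⟪F x, y - z⟫ := by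
    have : ⟪(x - γ • F x) - z, z - y⟫ = γ * ⟪F x, y - z⟫ - ⟪x - z, y - z⟫ := by
      simp only [inner_sub_left, inner_sub_right, real_inner_smul_left]
      ring
    linarith
  have hcs : -(‖x - z‖ * ‖y - z‖) ≤ ⟪x - z, y - z⟫ :=
    neg_le_of_abs_le (abs_real_inner_le_norm _ _)
  have hlip : ⟪F x - F z, y - z⟫ ≤ L * ‖x - z‖ * ‖y - z‖ :=
    (real_inner_le_norm _ _).trans (mul_le_mul_of_nonneg_right (hLip x z) (norm_nonneg _))
  have hγinv : γ⁻¹ * -(‖x - z‖ * ‖y - z‖) ≤ ⟪F x, y - z⟫ := by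
    have := mul_le_mul_of_nonneg_left (hcs.trans hproj) (inv_nonneg.2 hγ.le)
    rwa [inv_mul_cancel_left₀ hγ.ne'] at this
  rw [inner_sub_left] at hlip
  linarith

theorem continuous_of_forall_norm_sub_le {E E' : Type*} [SeminormedAddCommGroup E]
    [SeminormedAddCommGroup E'] {f : E → E'} {L : ℝ}
    (hf : ∀ x y, ‖f x - f y‖ ≤ L * ‖x - y‖) : Continuous f :=
  (LipschitzWith.of_dist_le_mul (K := L.toNNReal) fun x y => by
    simpa only [dist_eq_norm] using
      (hf x y).trans (mul_le_mul_of_nonneg_right (Real.le_coe_toNNReal L) (norm_nonneg _)))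
  |>.continuous

theorem tendsto_mul_norm_sub_mul_norm_sub {E : Type*} [SeminormedAddCommGroup E] {ξ ζ : ℕ → E}
    (hres : Tendsto (fun j => ‖ξ j - ζ j‖) atTop (𝓝 0)) (hζ : Bornology.IsBounded (Set.range ζ))
    (c : ℝ) (y : E) : Tendsto (fun j => -(c * ‖ξ j - ζ j‖ * ‖y - ζ j‖)) atTop (𝓝 0) := by
  obtain ⟨C, hC⟩ := isBounded_iff_forall_norm_le.1 hζ
  have hbdd : IsBoundedUnder (· ≤ ·) atTop fun j => ‖‖y - ζ j‖‖ :=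
    isBoundedUnder_of ⟨‖y‖ + C, fun j => by
      rw [norm_norm]
      exact (norm_sub_le _ _).trans (add_le_add_right (hC _ ⟨j, rfl⟩) _)⟩
  simpa [mul_assoc] using ((hres.zero_mul_isBoundedUnder_le hbdd).const_mul c).neg

theorem PseudomonotoneOn.tendsto_inner_map_sub {X : Set H} {F : H → H} {ζ : ℕ → H} {xhat p : H}
    {b : ℕ → ℝ} (hPM : PseudomonotoneOn F X) (hp : IsVISolution X F p) (hζX : ∀ j, ζ j ∈ X)
    (hFζ : WeakTendsto (F ∘ ζ) (F xhat)) (hb : Tendsto b atTop (𝓝 0))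
    (hbp : ∀ j, b j ≤ ⟪F (ζ j), p - ζ j⟫) (y : H) :
    Tendsto (fun j => ⟪F (ζ j), y - ζ j⟫) atTop (𝓝 ⟪F xhat, y - p⟫) := by
  have hgap : Tendsto (fun j => ⟪F (ζ j), ζ j - p⟫) atTop (𝓝 0) := by
    refine squeeze_zero (fun j => hPM p hp.1 (ζ j) (hζX j) (hp.2 _ (hζX j))) (fun j => ?_)
      (by simpa using hb.neg)
    have := hbp j
    rw [← neg_sub, inner_neg_right] at this
    linarith
  have hsplit : ∀ j, ⟪F (ζ j), y - ζ j⟫ = ⟪F (ζ j), y - p⟫ - ⟪F (ζ j), ζ j - p⟫ := fun j => by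
    rw [← inner_sub_right, sub_sub_sub_cancel_right]
  simpa only [Function.comp_apply, hsplit, sub_zero] using (hFζ (y - p)).sub hgap

theorem PseudomonotoneOn.inner_sub_nonneg_of_eventually {X : Set H} {F : H → H} {ζ : ℕ → H}
    {xhat w : H} (hPM : PseudomonotoneOn F X) (hζX : ∀ j, ζ j ∈ X) (hζ : WeakTendsto ζ xhat)
    (hw : w ∈ X) (h : ∀ᶠ j in atTop, 0 ≤ ⟪F (ζ j), w - ζ j⟫) : 0 ≤ ⟪F w, w - xhat⟫ := by
  have hlim : Tendsto (fun j => ⟪F w, w - ζ j⟫) atTop (𝓝 ⟪F w, w - xhat⟫) := by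
    simpa only [inner_sub_right, real_inner_comm (F w)] using
      (hζ (F w)).const_sub ⟪F w, w⟫
  exact ge_of_tendsto hlim (h.mono fun j hj => hPM (ζ j) (hζX j) w hw hj)

theorem inner_map_sub_nonneg_of_segment {F : H → H} {x y : H} (hF : ContinuousAt F x)
    (h : ∀ᶠ t in 𝓝[>] (0 : ℝ), 0 ≤ ⟪F (x + t • (y - x)), y - x⟫) : 0 ≤ ⟪F x, y - x⟫ := by
  have hseg : Tendsto (fun t : ℝ => x + t • (y - x)) (𝓝[>] 0) (𝓝 x) := by
    have : Tendsto (fun t : ℝ => x + t • (y - x)) (𝓝 0) (𝓝 (x + (0 : ℝ) • (y - x))) :=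
      tendsto_const_nhds.add (tendsto_id.smul_const _)
    rw [zero_smul, add_zero] at this
    exact this.mono_left nhdsWithin_le_nhds
  exact ge_of_tendsto ((hF.tendsto.comp hseg).inner tendsto_const_nhds) h

theorem isVISolution_of_tendsto_inner_map_sub {X : Set H} {F : H → H} {ζ : ℕ → H} {xhat p : H}
    (hXconv : Convex ℝ X) (hPM : PseudomonotoneOn F X) (hF : ContinuousAt F xhat)
    (hζX : ∀ j, ζ j ∈ X) (hζ : WeakTendsto ζ xhat) (hxhat : xhat ∈ X)
    (hlim : ∀ y, Tendsto (fun j => ⟪F (ζ j), y - ζ j⟫) atTop (𝓝 ⟪F xhat, y - p⟫))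
    (hℓ : ∀ y ∈ X, 0 ≤ ⟪F xhat, y - p⟫) : IsVISolution X F xhat := by
  refine ⟨hxhat, fun y hy => ?_⟩
  rcases (hℓ xhat hxhat).eq_or_lt with hm | hm
  · rw [← sub_sub_sub_cancel_right y xhat p, inner_sub_right, ← hm, sub_zero]
    exact hℓ y hy
  refine inner_map_sub_nonneg_of_segment hF ?_
  filter_upwards [Ioo_mem_nhdsGT one_pos] with t ⟨ht0, ht1⟩
  have hyt : xhat + t • (y - xhat) ∈ X := by
    simpa [smul_sub, sub_smul, add_sub, add_comm] using
      hXconv hxhat hy (sub_nonneg.2 ht1.le) ht0.le (sub_add_cancel 1 t)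
  have hpos : 0 < ⟪F xhat, xhat + t • (y - xhat) - p⟫ := by
    have hsplit : ⟪F xhat, xhat + t • (y - xhat) - p⟫ =
        (1 - t) * ⟪F xhat, xhat - p⟫ + t * ⟪F xhat, y - p⟫ := by
      simp only [inner_sub_right, inner_add_right, real_inner_smul_right]
      ring
    rw [hsplit]
    exact add_pos_of_pos_of_nonneg (mul_pos (sub_pos.2 ht1) hm) (mul_nonneg ht0.le (hℓ y hy))
  have hmono := hPM.inner_sub_nonneg_of_eventually hζX hζ hyt
    ((hlim _).eventually (eventually_ge_nhds hpos))
  rw [add_sub_cancel_left, real_inner_smul_right] at hmono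
  exact nonneg_of_mul_nonneg_right hmono ht0

end

theorem fbf_weak_cluster_point_is_solution_general
    {H : Type*} [NormedAddCommGroup H] [InnerProductSpace ℝ H] [CompleteSpace H]
    (X : Set H) (hXcl : IsClosed X) (hXconv : Convex ℝ X)
    (F : H → H) (L : ℝ)
    (hLip : ∀ x y : H, ‖F x - F y‖ ≤ L * ‖x - y‖)
    (hPM : ∀ x ∈ X, ∀ y ∈ X, 0 ≤ ⟪F x, y - x⟫ → 0 ≤ ⟪F y, y - x⟫)
    (hFww : ∀ (u : ℕ → H) (v : H), Bornology.IsBounded (Set.range u) →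
      (∀ w : H, Tendsto (fun n => ⟪u n, w⟫) atTop (nhds ⟪v, w⟫)) →
      ∀ w : H, Tendsto (fun n => ⟪F (u n), w⟫) atTop (nhds ⟪F v, w⟫))
    (Xstar : Set H)
    (hXstar : Xstar = {y | y ∈ X ∧ ∀ w ∈ X, 0 ≤ ⟪F y, w - y⟫})
    (hXstarNe : Xstar.Nonempty)
    (γ : ℝ) (hγ : γ ∈ Set.Ioo 0 (1 / L))
    (x z : ℕ → H)
    -- `z k = P_X (x k - γ F (x k))`, via the variational characterization of the projection
    (hz : ∀ k, z k ∈ X ∧ ∀ y ∈ X, 0 ≤ ⟪(x k - γ • F (x k)) - z k, z k - y⟫)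
    (κ : ℕ → ℕ) (xhat : H)
    (hweak : ∀ u : H, Tendsto (fun j => ⟪x (κ j), u⟫) atTop (nhds ⟪xhat, u⟫))
    (hres : Tendsto (fun j => ‖x (κ j) - z (κ j)‖) atTop (nhds 0)) :
    xhat ∈ Xstar := by
  subst hXstar
  obtain ⟨p, hp⟩ := hXstarNe
  set ζ : ℕ → H := fun j => z (κ j)
  have hζX : ∀ j, ζ j ∈ X := fun j => (hz (κ j)).1
  have hζ : WeakTendsto ζ xhat := WeakTendsto.of_tendsto_norm_sub hweak hres
  have hFζ : WeakTendsto (F ∘ ζ) (F xhat) := hFww ζ xhat hζ.isBounded_range hζ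
  have hlow : ∀ y ∈ X, ∀ j, -((γ⁻¹ + L) * ‖x (κ j) - ζ j‖ * ‖y - ζ j‖) ≤ ⟪F (ζ j), y - ζ j⟫ :=
    fun y hy j => neg_mul_le_inner_of_projection_step hLip hγ.1 ((hz (κ j)).2 y hy)
  have hbound := tendsto_mul_norm_sub_mul_norm_sub hres hζ.isBounded_range (γ⁻¹ + L)
  have hlim := PseudomonotoneOn.tendsto_inner_map_sub hPM hp hζX hFζ (hbound p) (hlow p hp.1)
  exact isVISolution_of_tendsto_inner_map_sub hXconv hPM
    (continuous_of_forall_norm_sub_le hLip).continuousAt hζX hζ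
    (hζ.mem_of_isClosed_of_convex hXcl hXconv hζX) hlim
    fun y hy => le_of_tendsto_of_tendsto' (hbound y) (hlim y) (hlow y hy)

/-- Weak sequential cluster points of the FBF iterates along which the residual
vanishes are solutions of the variational inequality. -/
theorem fbf_weak_cluster_point_is_solution
    {H : Type*} [NormedAddCommGroup H] [InnerProductSpace ℝ H] [CompleteSpace H]
    (X : Set H) (hXne : X.Nonempty) (hXcl : IsClosed X) (hXconv : Convex ℝ X)
    (F : H → H) (L : ℝ) (hL : 0 < L)
    (hLip : ∀ x y : H, ‖F x - F y‖ ≤ L * ‖x - y‖)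
    (hPM : ∀ x ∈ X, ∀ y ∈ X, 0 ≤ ⟪F x, y - x⟫ → 0 ≤ ⟪F y, y - x⟫)
    (hFww : ∀ (u : ℕ → H) (v : H), Bornology.IsBounded (Set.range u) →
      (∀ w : H, Tendsto (fun n => ⟪u n, w⟫) atTop (nhds ⟪v, w⟫)) →
      ∀ w : H, Tendsto (fun n => ⟪F (u n), w⟫) atTop (nhds ⟪F v, w⟫))
    (Xstar : Set H)
    (hXstar : Xstar = {y | y ∈ X ∧ ∀ w ∈ X, 0 ≤ ⟪F y, w - y⟫})
    (hXstarNe : Xstar.Nonempty) (hXstarCl : IsClosed Xstar) (hXstarConv : Convex ℝ Xstar)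
    (γ : ℝ) (hγ : γ ∈ Set.Ioo 0 (1 / L))
    (α β : ℕ → ℝ) (hα : ∀ k, α k ∈ Set.Ioo (0 : ℝ) 1) (hβ : ∀ k, β k ∈ Set.Ioo (0 : ℝ) 1)
    (x z r : ℕ → H) (hx0 : x 0 ∈ X)
    -- `z k = P_X (x k - γ F (x k))`, via the variational characterization of the projection
    (hz : ∀ k, z k ∈ X ∧ ∀ y ∈ X, 0 ≤ ⟪(x k - γ • F (x k)) - z k, z k - y⟫)
    (hr : ∀ k, r k = z k + γ • (F (x k) - F (z k)))
    (hxs : ∀ k, x (k + 1) = (1 - α k - β k) • x k + β k • r k)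
    (κ : ℕ → ℕ) (hκ : StrictMono κ) (xhat : H)
    (hweak : ∀ u : H, Tendsto (fun j => ⟪x (κ j), u⟫) atTop (nhds ⟪xhat, u⟫))
    (hres : Tendsto (fun j => ‖x (κ j) - z (κ j)‖) atTop (nhds 0)) :
    xhat ∈ Xstar :=
  fbf_weak_cluster_point_is_solution_general X hXcl hXconv F L hLip hPM hFww Xstar hXstar hXstarNe γ
    hγ x z hz κ xhat hweak hres
end

section
/- (Fundamental recursion, adaptive step-size.) For every solution x* ∈ X* of VI(X,F) and every k ≥ 1, the iterates of the adaptive FBF algorithm satisfy ‖r^k − x*‖² ≤ ‖x^k − x*‖² − (1 − γ_k² ρ² / γ_{k+1}²) ‖x^k − z^k‖². -/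
open scoped RealInnerProductSpace
open Filter

/-- Fundamental recursion for the adaptive-step FBF algorithm. -/
theorem fbf_adaptive_fundamental_recursion
    {H : Type*} [NormedAddCommGroup H] [InnerProductSpace ℝ H] [CompleteSpace H]
    (X : Set H) (hXne : X.Nonempty) (hXcl : IsClosed X) (hXconv : Convex ℝ X)
    (F : H → H) (L : ℝ) (hL : 0 < L)
    (hLip : ∀ x y : H, ‖F x - F y‖ ≤ L * ‖x - y‖)
    (hPM : ∀ x ∈ X, ∀ y ∈ X, 0 ≤ ⟪F x, y - x⟫ → 0 ≤ ⟪F y, y - x⟫)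
    (α β : ℕ → ℝ) (hα : ∀ k, α k ∈ Set.Ioo (0 : ℝ) 1) (hβ : ∀ k, β k ∈ Set.Ioo (0 : ℝ) 1)
    (x z r : ℕ → H) (hx0 : x 0 ∈ X)
    (γ : ℕ → ℝ) (γ0 ρ : ℝ) (hγ0 : 0 < γ0) (hρ : ρ ∈ Set.Ioo (0 : ℝ) 1)
    (hγinit : γ 0 = γ0)
    (hγrec : ∀ k, (F (z k) ≠ F (x k) →
        γ (k + 1) = min (ρ * ‖z k - x k‖ / ‖F (z k) - F (x k)‖) (γ k)) ∧
      (F (z k) = F (x k) → γ (k + 1) = γ k))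
    (hz : ∀ k, z k ∈ X ∧ ∀ y ∈ X, 0 ≤ ⟪(x k - γ k • F (x k)) - z k, z k - y⟫)
    (hr : ∀ k, r k = z k + γ k • (F (x k) - F (z k)))
    (hxs : ∀ k, x (k + 1) = (1 - α k - β k) • x k + β k • r k)
    (xstar : H) (hstar : xstar ∈ X ∧ ∀ y ∈ X, 0 ≤ ⟪F xstar, y - xstar⟫) :
    ∀ k, 1 ≤ k → ‖r k - xstar‖ ^ 2 ≤
      ‖x k - xstar‖ ^ 2 - (1 - γ k ^ 2 * ρ ^ 2 / γ (k + 1) ^ 2) * ‖x k - z k‖ ^ 2 := by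
  -- positivity of γ
  have hγpos : ∀ k, 0 < γ k := by
    intro k
    induction k with
    | zero => rw [hγinit]; exact hγ0
    | succ n ih =>
      by_cases h : F (z n) = F (x n)
      · rw [(hγrec n).2 h]; exact ih
      · rw [(hγrec n).1 h]
        have hFne : 0 < ‖F (z n) - F (x n)‖ := by
          rw [norm_pos_iff]; exact sub_ne_zero.mpr h
        have hzx : z n ≠ x n := by
          intro he; exact h (by rw [he])
        have hzxpos : 0 < ‖z n - x n‖ := by
          rw [norm_pos_iff]; exact sub_ne_zero.mpr hzx
        exact lt_min (div_pos (mul_pos hρ.1 hzxpos) hFne) ih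
  intro k _
  set a := x k with ha
  set b := z k with hb
  set g := γ k with hg
  have hgpos : 0 < g := hγpos k
  have hg1pos : 0 < γ (k + 1) := hγpos (k + 1)
  -- projection inequality at xstar
  have hproj : 0 ≤ ⟪(a - g • F a) - b, b - xstar⟫ := (hz k).2 xstar hstar.1
  have hproj' : 0 ≤ ⟪a - b, b - xstar⟫ - g * ⟪F a, b - xstar⟫ := by
    have : (a - g • F a) - b = (a - b) - g • F a := by abel
    rw [this, inner_sub_left, real_inner_smul_left] at hproj
    linarith
  -- pseudomonotonicity
  have hpm : 0 ≤ ⟪F b, b - xstar⟫ :=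
    hPM xstar hstar.1 b (hz k).1 (hstar.2 b (hz k).1)
  -- expansion of ‖r k - xstar‖²
  have hrk : r k - xstar = (b - xstar) + g • (F a - F b) := by
    rw [hr k]; abel
  have e1 : ‖r k - xstar‖ ^ 2 = ‖b - xstar‖ ^ 2
      + 2 * (g * ⟪F a - F b, b - xstar⟫) + g ^ 2 * ‖F a - F b‖ ^ 2 := by
    rw [hrk, norm_add_sq_real, real_inner_smul_right, norm_smul, mul_pow]
    rw [real_inner_comm, Real.norm_eq_abs, abs_of_pos hgpos]
  have e2 : ‖a - xstar‖ ^ 2 = ‖a - b‖ ^ 2 + 2 * ⟪a - b, b - xstar⟫ + ‖b - xstar‖ ^ 2 := by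
    have : a - xstar = (a - b) + (b - xstar) := by abel
    rw [this, norm_add_sq_real]
  have e3 : ⟪F a - F b, b - xstar⟫ = ⟪F a, b - xstar⟫ - ⟪F b, b - xstar⟫ :=
    inner_sub_left _ _ _
  -- step-size estimate
  have hstep : g ^ 2 * ‖F a - F b‖ ^ 2 ≤ g ^ 2 * ρ ^ 2 / γ (k + 1) ^ 2 * ‖a - b‖ ^ 2 := by
    by_cases h : F (z k) = F (x k)
    · have : F a - F b = 0 := by rw [ha, hb, h]; abel
      rw [this, norm_zero]
      have : (0:ℝ) ≤ g ^ 2 * ρ ^ 2 / γ (k + 1) ^ 2 * ‖a - b‖ ^ 2 := by positivity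
      simpa using this
    · have hFne : 0 < ‖F (z k) - F (x k)‖ := by
        rw [norm_pos_iff]; exact sub_ne_zero.mpr h
      have hle : γ (k + 1) ≤ ρ * ‖z k - x k‖ / ‖F (z k) - F (x k)‖ := by
        rw [(hγrec k).1 h]; exact min_le_left _ _
      have hkey : γ (k + 1) * ‖F (z k) - F (x k)‖ ≤ ρ * ‖z k - x k‖ := by
        rw [div_eq_mul_inv] at hle
        calc γ (k + 1) * ‖F (z k) - F (x k)‖
            ≤ ρ * ‖z k - x k‖ * ‖F (z k) - F (x k)‖⁻¹ * ‖F (z k) - F (x k)‖ := by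
              exact mul_le_mul_of_nonneg_right hle hFne.le
          _ = ρ * ‖z k - x k‖ := by field_simp
      have h1 : ‖F a - F b‖ = ‖F (z k) - F (x k)‖ := by
        rw [ha, hb, norm_sub_rev]
      have h2 : ‖a - b‖ = ‖z k - x k‖ := by rw [ha, hb, norm_sub_rev]
      have hρpos : 0 < ρ := hρ.1
      have hFab : ‖F a - F b‖ ≤ ρ * ‖a - b‖ / γ (k + 1) := by
        rw [h1, h2, le_div_iff₀ hg1pos]
        nlinarith [hkey]
      have hnn : (0:ℝ) ≤ ‖F a - F b‖ := norm_nonneg _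
      have hsq : ‖F a - F b‖ ^ 2 ≤ (ρ * ‖a - b‖ / γ (k + 1)) ^ 2 :=
        pow_le_pow_left₀ hnn hFab 2
      calc g ^ 2 * ‖F a - F b‖ ^ 2 ≤ g ^ 2 * (ρ * ‖a - b‖ / γ (k + 1)) ^ 2 :=
            mul_le_mul_of_nonneg_left hsq (sq_nonneg g)
        _ = g ^ 2 * ρ ^ 2 / γ (k + 1) ^ 2 * ‖a - b‖ ^ 2 := by
            rw [div_pow, mul_pow]; ring
  -- combine
  have : ‖r k - xstar‖ ^ 2 ≤ ‖a - xstar‖ ^ 2 - ‖a - b‖ ^ 2 + g ^ 2 * ‖F a - F b‖ ^ 2 := by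
    rw [e1, e3]
    nlinarith [hproj', hpm, hgpos]
  calc ‖r k - xstar‖ ^ 2 ≤ ‖a - xstar‖ ^ 2 - ‖a - b‖ ^ 2 + g ^ 2 * ‖F a - F b‖ ^ 2 := this
    _ ≤ ‖a - xstar‖ ^ 2 - ‖a - b‖ ^ 2 + g ^ 2 * ρ ^ 2 / γ (k + 1) ^ 2 * ‖a - b‖ ^ 2 := by
        linarith [hstep]
    _ = ‖a - xstar‖ ^ 2 - (1 - g ^ 2 * ρ ^ 2 / γ (k + 1) ^ 2) * ‖a - b‖ ^ 2 := by ring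
end
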